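/- Let φ : ℝ → ℝ be 1-Lipschitz, nonconstant, with φ(0) = 0, and let σ_w > 0 be small enough that β := (σ_w²/2) ∫_ℝ z² |z² − 1| dγ(z) < 1, where γ = N(0,1). Then the map T(s) = σ_w² ∫_ℝ φ(u)² dN(0, s + 1)(u) has a unique fixed point σ*² in [0, ∞), i.e. σ*² = σ_w² ∫_ℝ φ(u)² dN(0, σ*² + 1)(u), and this fixed point satisfies σ*² > 0. -/

import Mathlib

/-!
Write `T(s) = σ_w² E φ(√(s+1) Z)²` with `Z ∼ N(0,1)`. Since `φ` is 1-Lipschitz with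
`φ(0) = 0`, `|φ(x)² - φ(y)²| ≤ |x² - y²|` whenever `xy ≥ 0`, so
`|T s - T t| ≤ σ_w² |s - t| E Z² = σ_w² |s - t|`.
The Gaussian moments `E Z² = 1`, `E Z⁴ = 3` give `E Z²|Z² - 1| ≥ E (Z⁴ - Z²) = 2`, hence
`σ_w² ≤ β < 1`, and `T` is a contraction of `[0, ∞)`: Banach's theorem gives the unique fixed
point. It is positive because `T > 0` as soon as `φ ≢ 0`.
-/

open MeasureTheory ProbabilityTheory Real Set Function
open scoped NNReal

namespace ProbabilityTheory

lemma hasDerivAt_gaussianPDFReal_zero_one (x : ℝ) :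
    HasDerivAt (gaussianPDFReal 0 1) (-x * gaussianPDFReal 0 1 x) x := by
  have h : HasDerivAt (fun y : ℝ => -y ^ 2 / 2) (-x) x :=
    ((hasDerivAt_pow 2 x).neg.div_const 2).congr_deriv (by ring)
  have hp : gaussianPDFReal 0 1 = fun y => (√(2 * π))⁻¹ * rexp (-y ^ 2 / 2) := by
    ext y; simp [gaussianPDFReal]
  rw [hp]
  exact (h.exp.const_mul _).congr_deriv (by ring)

lemma integrable_pow_gaussianReal (μ : ℝ) (v : ℝ≥0) (n : ℕ) :
    Integrable (fun x => x ^ n) (gaussianReal μ v) := by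
  rcases n.eq_zero_or_pos with rfl | hn
  · simp
  refine (integrable_norm_iff (by fun_prop)).1 ?_
  simpa [norm_pow] using (memLp_id_gaussianReal (μ := μ) (v := v) n).integrable_norm_pow hn.ne'

lemma integrable_pow_mul_gaussianPDFReal (μ : ℝ) {v : ℝ≥0} (hv : v ≠ 0) (n : ℕ) :
    Integrable (fun x => x ^ n * gaussianPDFReal μ v x) := by
  have h := integrable_pow_gaussianReal μ v n
  rw [gaussianReal_of_var_ne_zero μ hv, integrable_withDensity_iff_integrable_smul'
    (measurable_gaussianPDF μ v) (ae_of_all _ fun _ => gaussianPDF_lt_top)] at h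
  simpa [toReal_gaussianPDF, mul_comm] using h

/-- Stein's identity for monomials: integrate the derivative of `x ^ (n + 1) * pdf x`. -/
lemma integral_pow_add_two_gaussianReal (n : ℕ) :
    ∫ x, x ^ (n + 2) ∂gaussianReal 0 1 = (n + 1) * ∫ x, x ^ n ∂gaussianReal 0 1 := by
  have hint := integrable_pow_mul_gaussianPDFReal 0 one_ne_zero
  have hderiv (x : ℝ) : HasDerivAt (fun y => y ^ (n + 1) * gaussianPDFReal 0 1 y)
      ((n + 1) * (x ^ n * gaussianPDFReal 0 1 x) - x ^ (n + 2) * gaussianPDFReal 0 1 x) x :=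
    ((hasDerivAt_pow (n + 1) x).mul (hasDerivAt_gaussianPDFReal_zero_one x)).congr_deriv
      (by rw [Nat.add_sub_cancel]; push_cast; ring)
  have h := integral_eq_zero_of_hasDerivAt_of_integrable hderiv
    (((hint n).const_mul _).sub (hint (n + 2))) (hint (n + 1))
  rw [integral_sub ((hint n).const_mul _) (hint (n + 2)), integral_const_mul, sub_eq_zero] at h
  simp_rw [integral_gaussianReal_eq_integral_smul one_ne_zero, smul_eq_mul,
    mul_comm (gaussianPDFReal 0 1 _)]
  exact h.symm

lemma integral_sq_gaussianReal_zero_one : ∫ x, x ^ 2 ∂gaussianReal 0 1 = 1 := by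
  simpa using integral_pow_add_two_gaussianReal 0

lemma integral_pow_four_gaussianReal_zero_one : ∫ x, x ^ 4 ∂gaussianReal 0 1 = 3 := by
  rw [integral_pow_add_two_gaussianReal 2, integral_sq_gaussianReal_zero_one]
  norm_num

lemma two_le_integral_sq_mul_abs_sq_sub_one :
    2 ≤ ∫ z, z ^ 2 * |z ^ 2 - 1| ∂gaussianReal 0 1 := by
  have hint := integrable_pow_gaussianReal 0 1
  have habs (z : ℝ) : z ^ 2 * |z ^ 2 - 1| = |z ^ 4 - z ^ 2| := by
    rw [← abs_sq z, ← abs_mul, abs_sq]; ring_nf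
  calc (2 : ℝ) = ∫ z, (z ^ 4 - z ^ 2) ∂gaussianReal 0 1 := by
        rw [integral_sub (hint 4) (hint 2), integral_pow_four_gaussianReal_zero_one,
          integral_sq_gaussianReal_zero_one]
        norm_num
    _ ≤ ∫ z, z ^ 2 * |z ^ 2 - 1| ∂gaussianReal 0 1 := by
        simp_rw [habs]
        exact integral_mono ((hint 4).sub (hint 2)) ((hint 4).sub (hint 2)).abs
          fun z => le_abs_self _

lemma gaussianReal_map_sqrt_mul (v : ℝ≥0) :
    (gaussianReal 0 1).map (√v * ·) = gaussianReal 0 v := by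
  rw [gaussianReal_map_const_mul, mul_zero, mul_one]
  congr
  exact sq_sqrt v.coe_nonneg

lemma integral_gaussianReal_eq_integral_sqrt_mul (v : ℝ≥0) {f : ℝ → ℝ}
    (hf : AEStronglyMeasurable f (gaussianReal 0 v)) :
    ∫ x, f x ∂gaussianReal 0 v = ∫ z, f (√v * z) ∂gaussianReal 0 1 := by
  rw [← gaussianReal_map_sqrt_mul v] at hf ⊢
  exact integral_map (by fun_prop) hf

end ProbabilityTheory

theorem existsUnique_isFixedPt_of_lipschitzOnWith {α : Type*} [MetricSpace α] {K : ℝ≥0}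
    {f : α → α} {s : Set α} (hK : K < 1) (hf : LipschitzOnWith K f s) (hsc : IsComplete s)
    (hsf : MapsTo f s s) (hs : s.Nonempty) : ∃! x, x ∈ s ∧ IsFixedPt f x := by
  have hc : ContractingWith K (hsf.restrict f s s) := ⟨hK, hf.mapsToRestrict hsf⟩
  obtain ⟨x, hx⟩ := hs
  obtain ⟨y, hys, hy, -⟩ := hc.exists_fixedPoint' hsc hsf hx (edist_ne_top _ _)
  refine ⟨y, ⟨hys, hy⟩, fun z ⟨hzs, hz⟩ => ?_⟩
  exact congrArg Subtype.val
    (hc.fixedPoint_unique' (x := ⟨z, hzs⟩) (y := ⟨y, hys⟩) (Subtype.ext hz)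
      (Subtype.ext hy))

namespace LipschitzWith

variable {φ : ℝ → ℝ} (hφ : LipschitzWith 1 φ) (hφ0 : φ 0 = 0)
include hφ hφ0

lemma abs_apply_le_abs (u : ℝ) : |φ u| ≤ |u| := by
  simpa using hφ.norm_le_mul hφ0 u

lemma abs_sq_sub_sq_le {x y : ℝ} (hxy : 0 ≤ x * y) :
    |φ x ^ 2 - φ y ^ 2| ≤ |x ^ 2 - y ^ 2| := by
  have hsub : |φ x - φ y| ≤ |x - y| := by simpa [Real.dist_eq] using hφ.dist_le_mul x y
  have hadd : |φ x + φ y| ≤ |x + y| :=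
    calc |φ x + φ y| ≤ |φ x| + |φ y| := abs_add_le _ _
      _ ≤ |x| + |y| := add_le_add (hφ.abs_apply_le_abs hφ0 x) (hφ.abs_apply_le_abs hφ0 y)
      _ = |x + y| := ((abs_add_eq_add_abs_iff x y).2 (mul_nonneg_iff.1 hxy)).symm
  calc |φ x ^ 2 - φ y ^ 2| = |φ x - φ y| * |φ x + φ y| := by rw [← abs_mul]; ring_nf
    _ ≤ |x - y| * |x + y| := mul_le_mul hsub hadd (abs_nonneg _) (abs_nonneg _)
    _ = |x ^ 2 - y ^ 2| := by rw [← abs_mul]; ring_nf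

lemma integrable_sq_comp_const_mul_gaussianReal (c : ℝ) :
    Integrable (fun z => φ (c * z) ^ 2) (gaussianReal 0 1) := by
  refine ((integrable_pow_gaussianReal 0 1 2).const_mul (c ^ 2)).mono'
    (by have := hφ.continuous; fun_prop) (ae_of_all _ fun z => ?_)
  rw [Real.norm_of_nonneg (sq_nonneg _), ← mul_pow]
  exact sq_le_sq.2 (hφ.abs_apply_le_abs hφ0 _)

lemma integrable_sq_gaussianReal (μ : ℝ) (v : ℝ≥0) :
    Integrable (fun u => φ u ^ 2) (gaussianReal μ v) := by
  refine (integrable_pow_gaussianReal μ v 2).mono' (hφ.continuous.pow 2).aestronglyMeasurable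
    (ae_of_all _ fun u => ?_)
  rw [Real.norm_of_nonneg (sq_nonneg _)]
  exact sq_le_sq.2 (hφ.abs_apply_le_abs hφ0 u)

end LipschitzWith

lemma abs_integral_sq_gaussianReal_sub_le {φ : ℝ → ℝ} (hφ : LipschitzWith 1 φ) (hφ0 : φ 0 = 0)
    (v w : ℝ≥0) :
    |∫ u, φ u ^ 2 ∂gaussianReal 0 v - ∫ u, φ u ^ 2 ∂gaussianReal 0 w| ≤ |(v : ℝ) - w| := by
  have hmeas : ∀ v : ℝ≥0, AEStronglyMeasurable (fun u => φ u ^ 2) (gaussianReal 0 v) :=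
    fun _ => (hφ.continuous.pow 2).aestronglyMeasurable
  have hint := hφ.integrable_sq_comp_const_mul_gaussianReal hφ0
  rw [integral_gaussianReal_eq_integral_sqrt_mul v (hmeas v),
    integral_gaussianReal_eq_integral_sqrt_mul w (hmeas w), ← integral_sub (hint _) (hint _)]
  have hbound (z : ℝ) : |φ (√v * z) ^ 2 - φ (√w * z) ^ 2| ≤ |(v : ℝ) - w| * z ^ 2 := by
    have hsign : 0 ≤ √v * z * (√w * z) := by
      rw [mul_mul_mul_comm]; exact mul_nonneg (by positivity) (mul_self_nonneg z)
    refine (hφ.abs_sq_sub_sq_le hφ0 hsign).trans_eq ?_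
    rw [mul_pow, mul_pow, sq_sqrt v.coe_nonneg, sq_sqrt w.coe_nonneg, ← sub_mul, abs_mul, abs_sq]
  calc |∫ z, (φ (√v * z) ^ 2 - φ (√w * z) ^ 2) ∂gaussianReal 0 1|
      ≤ ∫ z, |φ (√v * z) ^ 2 - φ (√w * z) ^ 2| ∂gaussianReal 0 1 :=
        abs_integral_le_integral_abs
    _ ≤ ∫ z, |(v : ℝ) - w| * z ^ 2 ∂gaussianReal 0 1 :=
        integral_mono ((hint _).sub (hint _)).abs
          ((integrable_pow_gaussianReal 0 1 2).const_mul _) hbound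
    _ = |(v : ℝ) - w| := by rw [integral_const_mul, integral_sq_gaussianReal_zero_one, mul_one]

lemma integral_sq_gaussianReal_pos {φ : ℝ → ℝ} (hφ : Continuous φ) (hne : ∃ x, φ x ≠ 0)
    (μ : ℝ) {v : ℝ≥0} (hv : v ≠ 0) (hint : Integrable (fun u => φ u ^ 2) (gaussianReal μ v)) :
    0 < ∫ u, φ u ^ 2 ∂gaussianReal μ v := by
  rw [integral_pos_iff_support_of_nonneg (fun u => sq_nonneg _) hint]
  obtain ⟨x, hx⟩ := hne
  have hsupp : (support fun u => φ u ^ 2).Nonempty := ⟨x, pow_ne_zero 2 hx⟩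
  exact pos_iff_ne_zero.2 fun h0 =>
    (hφ.pow 2).isOpen_support.measure_ne_zero volume hsupp
      (gaussianReal_absolutelyContinuous' μ hv h0)

noncomputable def nngpVarianceMap (σw : ℝ) (φ : ℝ → ℝ) (s : ℝ) : ℝ :=
  σw ^ 2 * ∫ u, φ u ^ 2 ∂gaussianReal 0 (s + 1).toNNReal

section nngpVarianceMap

variable {φ : ℝ → ℝ} (σw : ℝ)

lemma nngpVarianceMap_nonneg (s : ℝ) : 0 ≤ nngpVarianceMap σw φ s :=
  mul_nonneg (sq_nonneg σw) (integral_nonneg fun _ => sq_nonneg _)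

lemma lipschitzOnWith_nngpVarianceMap (hφ : LipschitzWith 1 φ) (hφ0 : φ 0 = 0) :
    LipschitzOnWith (σw ^ 2).toNNReal (nngpVarianceMap σw φ) (Ici 0) := by
  refine LipschitzOnWith.of_dist_le_mul fun s (hs : 0 ≤ s) t (ht : 0 ≤ t) => ?_
  rw [Real.dist_eq, Real.dist_eq, Real.coe_toNNReal _ (sq_nonneg σw), nngpVarianceMap,
    nngpVarianceMap, ← mul_sub, abs_mul, abs_sq]
  refine mul_le_mul_of_nonneg_left ?_ (sq_nonneg σw)
  simpa [Real.coe_toNNReal _ (by linarith : 0 ≤ s + 1),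
    Real.coe_toNNReal _ (by linarith : 0 ≤ t + 1)] using
    abs_integral_sq_gaussianReal_sub_le hφ hφ0 (s + 1).toNNReal (t + 1).toNNReal

lemma nngpVarianceMap_pos (hσw : 0 < σw) (hφ : LipschitzWith 1 φ) (hφ0 : φ 0 = 0)
    (hne : ∃ x, φ x ≠ 0) {s : ℝ} (hs : 0 ≤ s) : 0 < nngpVarianceMap σw φ s :=
  mul_pos (by positivity) (integral_sq_gaussianReal_pos hφ.continuous hne 0
    (by simpa using hs.trans_lt (lt_add_one s)) (hφ.integrable_sq_gaussianReal hφ0 0 _))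

end nngpVarianceMap

/-- The one-step variance map `T(s) = σ_w² ∫ φ(u)² dN(0, s+1)(u)` has a unique fixed point
`σ*² ≥ 0`, and this fixed point is strictly positive. -/
theorem stmt12 (φ : ℝ → ℝ) (hφ : LipschitzWith 1 φ) (hφ0 : φ 0 = 0)
    (hnc : ∃ x y : ℝ, φ x ≠ φ y)
    (σw β : ℝ) (hσw : 0 < σw)
    (hβdef : β = σw ^ 2 / 2 * ∫ z, z ^ 2 * |z ^ 2 - 1| ∂(gaussianReal 0 1))
    (hβ : β < 1) :
    (∃! sstar : ℝ, 0 ≤ sstar ∧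
      sstar = σw ^ 2 * ∫ u, (φ u) ^ 2 ∂(gaussianReal 0 (Real.toNNReal (sstar + 1)))) ∧
    (∀ sstar : ℝ, 0 ≤ sstar →
      sstar = σw ^ 2 * ∫ u, (φ u) ^ 2 ∂(gaussianReal 0 (Real.toNNReal (sstar + 1))) →
      0 < sstar) := by
  have hσw1 : σw ^ 2 < 1 :=
    calc σw ^ 2 = σw ^ 2 / 2 * 2 := by ring
      _ ≤ σw ^ 2 / 2 * ∫ z, z ^ 2 * |z ^ 2 - 1| ∂gaussianReal 0 1 := by
        gcongr; exact two_le_integral_sq_mul_abs_sq_sub_one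
      _ = β := hβdef.symm
      _ < 1 := hβ
  have hne : ∃ x, φ x ≠ 0 := by
    obtain ⟨x, y, hxy⟩ := hnc
    by_contra! h
    exact hxy (by rw [h x, h y])
  obtain ⟨s, ⟨hs0, hsfix⟩, huniq⟩ := existsUnique_isFixedPt_of_lipschitzOnWith
    (toNNReal_lt_one.2 hσw1) (lipschitzOnWith_nngpVarianceMap σw hφ hφ0) isClosed_Ici.isComplete
    (fun s _ => nngpVarianceMap_nonneg σw s) nonempty_Ici
  exact ⟨⟨s, ⟨hs0, hsfix.symm⟩, fun t ⟨ht0, ht⟩ => huniq t ⟨ht0, ht.symm⟩⟩,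
    fun t ht0 ht => ht ▸ nngpVarianceMap_pos σw hσw hφ hφ0 hne ht0⟩
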